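/- Pre-image of the centering operator: for every (X,p) ∈ L^m, the set of (Y,q) ∈ L⁰ × ℤ with J(Y,q) = (X,p) is exactly Λ(X,p); moreover Λ(X,p) ⊆ L⁰ × ℤ, and for every (Y,p') ∈ Λ(X,p) one has b(Y) = sup supp(σ_{[p,p']}(X)⁺) and a(Y) = inf supp(σ_{[p,p']}(X)⁻). -/

import Mathlib

open scoped BigOperators

namespace COB

/-- Vectors of queue sizes indexed by prices in `I = {−d',…,d'}` (functions `ℤ → ℕ`
vanishing outside `I`; the support condition is part of membership in `Em`). -/
abbrev VecC := ℤ → ℕ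

/-- Pairs (buy side, sell side). -/
abbrev EC := VecC × VecC

/-- A vector is supported in `{−d',…,d'}`. -/
def suppIn (d' : ℕ) (Z : VecC) : Prop :=
  ∀ j : ℤ, Z j ≠ 0 → -(d' : ℤ) ≤ j ∧ j ≤ (d' : ℤ)

/-- Price support of a vector, inside `I = {−d',…,d'}`. -/
noncomputable def suppC (d' : ℕ) (Z : VecC) : Finset ℤ :=
  (Finset.Icc (-(d' : ℤ)) (d' : ℤ)).filter fun j => 0 < Z j

/-- `sup` of a finite set of prices, with the convention `sup ∅ = −d'`. -/
def supD (d' : ℕ) (S : Finset ℤ) : ℤ := if h : S.Nonempty then S.max' h else -(d' : ℤ)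

/-- `inf` of a finite set of prices, with the convention `inf ∅ = d'`. -/
def infD (d' : ℕ) (S : Finset ℤ) : ℤ := if h : S.Nonempty then S.min' h else (d' : ℤ)

/-- bid price `b(X) = sup supp(X⁺)` (convention `sup supp(0) = −d'`). -/
noncomputable def bC (d' : ℕ) (X : EC) : ℤ := supD d' (suppC d' X.1)

/-- ask price `a(X) = inf supp(X⁻)` (convention `inf supp(0) = d'`). -/
noncomputable def aC (d' : ℕ) (X : EC) : ℤ := infD d' (suppC d' X.2)

/-- `E^m`: configurations supported in `I` with nonempty buy and sell sides. -/
def Em (d' : ℕ) : Set EC :=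
  {X | suppIn d' X.1 ∧ suppIn d' X.2 ∧ X.1 ≠ 0 ∧ X.2 ≠ 0}

/-- `L⁰`: elements of `E^m` with `a(X) > b(X)`. -/
def L0 (d' : ℕ) : Set EC := {X | X ∈ Em d' ∧ bC d' X < aC d' X}

/-- `p̂`: the parity of `p` (`0` if `p` is even, `1` if `p` is odd). -/
def hatp (p : ℤ) : ℤ := p % 2

/-- `⌈p/2⌉` for an integer `p`. -/
def ceilHalf (p : ℤ) : ℤ := Int.fdiv (p + 1) 2

/-- `[p,p'] = ⌈p'/2⌉ − ⌈p/2⌉`. -/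
def shift (p p' : ℤ) : ℤ := ceilHalf p' - ceilHalf p

/-- The centred state space `L^m`. -/
def Lm (d' : ℕ) : Set (EC × ℤ) :=
  {Xp | Xp.1 ∈ Em d' ∧ bC d' Xp.1 < aC d' Xp.1 ∧
    aC d' Xp.1 + bC d' Xp.1 + hatp Xp.2 = 0}

/-- The truncating shift `σ_i` on a single vector. -/
def sigmaV (d' : ℕ) (i : ℤ) (Y : VecC) : VecC := fun j =>
  if min (d' : ℤ) ((d' : ℤ) - i) < j ∨ j < max (-(d' : ℤ)) (-(d' : ℤ) - i) then 0
  else Y (j + i)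

/-- The truncating shift `σ_i` acting componentwise on pairs. -/
def sigmaP (d' : ℕ) (i : ℤ) (Y : EC) : EC := (sigmaV d' i Y.1, sigmaV d' i Y.2)

/-- The centering operator `J(Y,p) = (σ_{[p,p']}(Y), p')`, `p' = p + a(Y) + b(Y) + p̂`. -/
noncomputable def J (d' : ℕ) (Y : EC) (p : ℤ) : EC × ℤ :=
  (sigmaP d' (shift p (p + aC d' Y + bC d' Y + hatp p)) Y,
    p + aC d' Y + bC d' Y + hatp p)


/-- `B_X(k) = Σ_{i ≥ k} X⁺_i` (sum over `I`). -/
noncomputable def BXC (d' : ℕ) (X : EC) (k : ℤ) : ℕ :=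
  ∑ j ∈ Finset.Icc (-(d' : ℤ)) (d' : ℤ), if k ≤ j then X.1 j else 0

/-- `S_X(k) = Σ_{i ≤ k} X⁻_i` (sum over `I`). -/
noncomputable def SXC (d' : ℕ) (X : EC) (k : ℤ) : ℕ :=
  ∑ j ∈ Finset.Icc (-(d' : ℤ)) (d' : ℤ), if j ≤ k then X.2 j else 0

/-- `g_X(k) = S_X(k) − B_X(k)`. -/
noncomputable def gXC (d' : ℕ) (X : EC) (k : ℤ) : ℤ := (SXC d' X k : ℤ) - (BXC d' X k : ℤ)

/-- `p_A(X) = inf{k ∈ I : g_X(k) > 0}`, convention `inf ∅ = d'+1`. -/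
noncomputable def pAC (d' : ℕ) (X : EC) : ℤ :=
  if h : ((Finset.Icc (-(d' : ℤ)) (d' : ℤ)).filter fun k => 0 < gXC d' X k).Nonempty
  then ((Finset.Icc (-(d' : ℤ)) (d' : ℤ)).filter fun k => 0 < gXC d' X k).min' h
  else (d' : ℤ) + 1

/-- `p_B(X) = sup{k ∈ I : g_X(k) < 0}`, convention `sup ∅ = −d'−1`. -/
noncomputable def pBC (d' : ℕ) (X : EC) : ℤ :=
  if h : ((Finset.Icc (-(d' : ℤ)) (d' : ℤ)).filter fun k => gXC d' X k < 0).Nonempty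
  then ((Finset.Icc (-(d' : ℤ)) (d' : ℤ)).filter fun k => gXC d' X k < 0).max' h
  else -(d' : ℤ) - 1

/-- `τ_i`: zero out entries at prices `> i`. -/
def tauLowC (d' : ℕ) (i : ℤ) (z : VecC) : VecC := fun j =>
  if j ≤ i ∧ -(d' : ℤ) ≤ j ∧ j ≤ (d' : ℤ) then z j else 0

/-- `τ^i`: zero out entries at prices `< i`. -/
def tauHighC (d' : ℕ) (i : ℤ) (z : VecC) : VecC := fun j =>
  if i ≤ j ∧ -(d' : ℤ) ≤ j ∧ j ≤ (d' : ℤ) then z j else 0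

/-- Standard basis vector at price `i ∈ I`. -/
def eC (d' : ℕ) (i : ℤ) : VecC := fun j =>
  if j = i ∧ -(d' : ℤ) ≤ i ∧ i ≤ (d' : ℤ) then 1 else 0

/-- Buy side after order-matching clearing (same formulas as in the fixed-price
framework). -/
noncomputable def clearPlusC (d' : ℕ) (X : EC) : VecC :=
  if gXC d' X (pBC d' X) ≤ -(X.1 (pBC d' X) : ℤ) then tauLowC d' (pBC d' X) X.1
  else fun j => tauLowC d' (pBC d' X - 1) X.1 j +
    (max 0 (-(gXC d' X (pBC d' X)))).toNat * eC d' (pBC d' X) j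

/-- Sell side after order-matching clearing. -/
noncomputable def clearMinusC (d' : ℕ) (X : EC) : VecC :=
  if (X.2 (pAC d' X) : ℤ) ≤ gXC d' X (pAC d' X) then tauHighC d' (pAC d' X) X.2
  else fun j => tauHighC d' (pAC d' X + 1) X.2 j +
    (max 0 (gXC d' X (pAC d' X))).toNat * eC d' (pAC d' X) j

/-- The order-matching clearing operator `C'` of the centred framework. -/
noncomputable def clearC (d' : ℕ) (X : EC) : EC := (clearPlusC d' X, clearMinusC d' X)

/-- The centred clearing operator `C^m(X,p) = J(C'(X), p)`. -/
noncomputable def Cm (d' : ℕ) (X : EC) (p : ℤ) : EC × ℤ := J d' (clearC d' X) p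

/-- The set `Γ^m(X)`: pre-image candidates of `X` under the order-matching clearing
operator `C'`. -/
def GammaM (d' : ℕ) (X : EC) : Set EC :=
  {Y | Y ∈ Em d' ∧
    (∀ j : ℤ, X.1 j ≤ Y.1 j ∧ X.2 j ≤ Y.2 j) ∧
    (∑ j ∈ Finset.Icc (-(d' : ℤ)) (d' : ℤ), ((Y.1 j : ℤ) - (X.1 j : ℤ))) =
      (∑ j ∈ Finset.Icc (-(d' : ℤ)) (d' : ℤ), ((Y.2 j : ℤ) - (X.2 j : ℤ))) ∧
    supD d' ((Finset.Icc (-(d' : ℤ)) (d' : ℤ)).filter fun j => X.2 j < Y.2 j) ≤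
      infD d' ((Finset.Icc (-(d' : ℤ)) (d' : ℤ)).filter fun j => X.1 j < Y.1 j) ∧
    supD d' ((Finset.Icc (-(d' : ℤ)) (d' : ℤ)).filter fun j => X.2 j < Y.2 j) ≤ aC d' X ∧
    bC d' X ≤ infD d' ((Finset.Icc (-(d' : ℤ)) (d' : ℤ)).filter fun j => X.1 j < Y.1 j)}

/-- The set `Λ(X,p)`: pre-image of `(X,p)` under the centering operator `J`. -/
def LambdaSet (d' : ℕ) (X : EC) (p : ℤ) : Set (EC × ℤ) :=
  {Yp | Yp.1 ∈ Em d' ∧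
    supD d' (suppC d' X.2) - (d' : ℤ) ≤ shift p Yp.2 ∧
    shift p Yp.2 ≤ (d' : ℤ) + infD d' (suppC d' X.1) ∧
    ∃ af bf : ℤ → ℕ,
      Yp.1.1 = (fun j => sigmaV d' (shift p Yp.2) X.1 j +
        if -(d' : ℤ) ≤ j ∧ j ≤ -(d' : ℤ) - shift p Yp.2 - 1 then bf j else 0) ∧
      Yp.1.2 = (fun j => sigmaV d' (shift p Yp.2) X.2 j +
        if (d' : ℤ) - shift p Yp.2 + 1 ≤ j ∧ j ≤ (d' : ℤ) then af j else 0)}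

/-! The centering operator `J` moves the book by `s = [q,p]`, and the centering condition
gives `2s = a(Y) + b(Y) + p̂`, so `b(Y) < s ≤ a(Y)`. The truncation `σ_s` therefore loses
only buy orders below `s − d'` and sell orders above `s + d'`, which are exactly the free
coefficients `b_j`, `a_j` of `Λ(X,p)`; the bounds on `[p,p']` in `Λ(X,p)` are what is needed
for the shifted quotes of `X` to stay in the price grid. Conversely, for `(Y,p') ∈ Λ(X,p)` the
quotes of `Y` are those of `X` shifted by `[p,p']`, and `J` undoes the shift. -/

section Extrema

variable {d' : ℕ} {S : Finset ℤ} {m : ℤ}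

lemma isGreatest_supD (h : S.Nonempty) : IsGreatest (S : Set ℤ) (supD d' S) := by
  rw [supD, dif_pos h]
  exact S.isGreatest_max' h

lemma isLeast_infD (h : S.Nonempty) : IsLeast (S : Set ℤ) (infD d' S) := by
  rw [infD, dif_pos h]
  exact S.isLeast_min' h

lemma supD_eq_of_isGreatest (h : IsGreatest (S : Set ℤ) m) : supD d' S = m :=
  (isGreatest_supD ⟨m, h.1⟩).unique h

lemma infD_eq_of_isLeast (h : IsLeast (S : Set ℤ) m) : infD d' S = m :=
  (isLeast_infD ⟨m, h.1⟩).unique h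

end Extrema

section Support

variable {d' : ℕ} {Z W : VecC} {j m : ℤ}

lemma mem_suppC : j ∈ suppC d' Z ↔ (-(d' : ℤ) ≤ j ∧ j ≤ d') ∧ Z j ≠ 0 := by
  simp [suppC, Nat.pos_iff_ne_zero]

lemma mem_suppC_of_suppIn (hs : suppIn d' Z) : j ∈ suppC d' Z ↔ Z j ≠ 0 :=
  mem_suppC.trans ⟨And.right, fun h => ⟨hs j h, h⟩⟩

lemma suppC_nonempty (hs : suppIn d' Z) (hZ : Z ≠ 0) : (suppC d' Z).Nonempty := by
  obtain ⟨j, hj⟩ := Function.ne_iff.mp hZ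
  exact ⟨j, (mem_suppC_of_suppIn hs).2 hj⟩

lemma isGreatest_suppC_add (h : IsGreatest (suppC d' Z : Set ℤ) m)
    (hW : ∀ j, W j ≠ 0 → j < m) : IsGreatest (suppC d' (Z + W) : Set ℤ) m := by
  obtain ⟨hm, hle⟩ := h
  simp only [Finset.mem_coe, mem_suppC] at hm
  refine ⟨by simp only [Finset.mem_coe, mem_suppC, Pi.add_apply]; omega, fun j hj => ?_⟩
  simp only [Finset.mem_coe, mem_suppC, Pi.add_apply] at hj
  by_cases hZj : Z j = 0
  · exact (hW j (by omega)).le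
  · exact hle (mem_suppC.2 ⟨hj.1, hZj⟩)

lemma isLeast_suppC_add (h : IsLeast (suppC d' Z : Set ℤ) m)
    (hW : ∀ j, W j ≠ 0 → m < j) : IsLeast (suppC d' (Z + W) : Set ℤ) m := by
  obtain ⟨hm, hle⟩ := h
  simp only [Finset.mem_coe, mem_suppC] at hm
  refine ⟨by simp only [Finset.mem_coe, mem_suppC, Pi.add_apply]; omega, fun j hj => ?_⟩
  simp only [Finset.mem_coe, mem_suppC, Pi.add_apply] at hj
  by_cases hZj : Z j = 0
  · exact (hW j (by omega)).le
  · exact hle (mem_suppC.2 ⟨hj.1, hZj⟩)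

end Support

section Shift

variable {d' : ℕ} {Z : VecC} {i k j m : ℤ}

lemma sigmaV_apply :
    sigmaV d' i Z j =
      if (-(d' : ℤ) ≤ j ∧ j ≤ d') ∧ (-(d' : ℤ) ≤ j + i ∧ j + i ≤ d') then Z (j + i) else 0 := by
  unfold sigmaV
  split_ifs <;> first | rfl | omega

lemma sigmaV_ne_zero_iff :
    sigmaV d' i Z j ≠ 0 ↔
      ((-(d' : ℤ) ≤ j ∧ j ≤ d') ∧ (-(d' : ℤ) ≤ j + i ∧ j + i ≤ d')) ∧ Z (j + i) ≠ 0 := by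
  rw [sigmaV_apply]
  split_ifs with h <;> simp [h]

lemma sigmaV_sigmaV (h : i + k = 0) :
    sigmaV d' i (sigmaV d' k Z) j =
      if (-(d' : ℤ) ≤ j ∧ j ≤ d') ∧ (-(d' : ℤ) ≤ j + i ∧ j + i ≤ d') then Z j else 0 := by
  rw [sigmaV_apply, sigmaV_apply, show j + i + k = j by omega]
  split_ifs <;> first | rfl | omega

lemma isGreatest_suppC_sigmaV (h : IsGreatest (suppC d' Z : Set ℤ) m)
    (hlo : -(d' : ℤ) ≤ m - i) (hhi : m - i ≤ d') :
    IsGreatest (suppC d' (sigmaV d' i Z) : Set ℤ) (m - i) := by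
  obtain ⟨hm, hle⟩ := h
  simp only [Finset.mem_coe, mem_suppC] at hm
  refine ⟨?_, fun j hj => ?_⟩
  · simp only [Finset.mem_coe, mem_suppC, sigmaV_ne_zero_iff, sub_add_cancel]
    omega
  · simp only [Finset.mem_coe, mem_suppC, sigmaV_ne_zero_iff] at hj
    have := hle (mem_suppC.2 ⟨hj.2.1.2, hj.2.2⟩)
    omega

lemma isLeast_suppC_sigmaV (h : IsLeast (suppC d' Z : Set ℤ) m)
    (hlo : -(d' : ℤ) ≤ m - i) (hhi : m - i ≤ d') :
    IsLeast (suppC d' (sigmaV d' i Z) : Set ℤ) (m - i) := by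
  obtain ⟨hm, hle⟩ := h
  simp only [Finset.mem_coe, mem_suppC] at hm
  refine ⟨?_, fun j hj => ?_⟩
  · simp only [Finset.mem_coe, mem_suppC, sigmaV_ne_zero_iff, sub_add_cancel]
    omega
  · simp only [Finset.mem_coe, mem_suppC, sigmaV_ne_zero_iff] at hj
    have := hle (mem_suppC.2 ⟨hj.2.1.2, hj.2.2⟩)
    omega

lemma sigmaV_sigmaV_neg_add_low (hs : suppIn d' Z) (h : ∀ j, Z j ≠ 0 → j + i ≤ d') :
    (fun j => sigmaV d' i (sigmaV d' (-i) Z) j +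
      if -(d' : ℤ) ≤ j ∧ j ≤ -(d' : ℤ) - i - 1 then Z j else 0) = Z := by
  funext j
  rw [sigmaV_sigmaV (add_neg_cancel i)]
  by_cases hZj : Z j = 0
  · simp [hZj]
  · have := hs j hZj
    have := h j hZj
    split_ifs <;> omega

lemma sigmaV_sigmaV_neg_add_high (hs : suppIn d' Z) (h : ∀ j, Z j ≠ 0 → -(d' : ℤ) ≤ j + i) :
    (fun j => sigmaV d' i (sigmaV d' (-i) Z) j +
      if (d' : ℤ) - i + 1 ≤ j ∧ j ≤ d' then Z j else 0) = Z := by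
  funext j
  rw [sigmaV_sigmaV (add_neg_cancel i)]
  by_cases hZj : Z j = 0
  · simp [hZj]
  · have := hs j hZj
    have := h j hZj
    split_ifs <;> omega

lemma sigmaV_neg_add_low
    (hZ : ∀ j, Z j ≠ 0 → -(d' : ℤ) ≤ j ∧ j ≤ d' ∧ -(d' : ℤ) ≤ j - i ∧ j - i ≤ d') (f : ℤ → ℕ) :
    sigmaV d' (-i) (fun j => sigmaV d' i Z j +
      if -(d' : ℤ) ≤ j ∧ j ≤ -(d' : ℤ) - i - 1 then f j else 0) = Z := by
  funext j
  simp only [sigmaV_apply, neg_add_cancel_right]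
  by_cases hZj : Z j = 0
  · simp only [hZj]
    split_ifs <;> omega
  · have := hZ j hZj
    split_ifs <;> omega

lemma sigmaV_neg_add_high
    (hZ : ∀ j, Z j ≠ 0 → -(d' : ℤ) ≤ j ∧ j ≤ d' ∧ -(d' : ℤ) ≤ j - i ∧ j - i ≤ d') (f : ℤ → ℕ) :
    sigmaV d' (-i) (fun j => sigmaV d' i Z j +
      if (d' : ℤ) - i + 1 ≤ j ∧ j ≤ d' then f j else 0) = Z := by
  funext j
  simp only [sigmaV_apply, neg_add_cancel_right]
  by_cases hZj : Z j = 0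
  · simp only [hZj]
    split_ifs <;> omega
  · have := hZ j hZj
    split_ifs <;> omega

end Shift

section Centering

variable {d' : ℕ} {X Y : EC} {p p' q : ℤ}

lemma isGreatest_bC (hX : X ∈ Em d') : IsGreatest (suppC d' X.1 : Set ℤ) (bC d' X) :=
  isGreatest_supD (suppC_nonempty hX.1 hX.2.2.1)

lemma isLeast_aC (hX : X ∈ Em d') : IsLeast (suppC d' X.2 : Set ℤ) (aC d' X) :=
  isLeast_infD (suppC_nonempty hX.2.1 hX.2.2.2)

lemma le_bC (hX : X ∈ Em d') {j : ℤ} (hj : X.1 j ≠ 0) : j ≤ bC d' X :=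
  (isGreatest_bC hX).2 ((mem_suppC_of_suppIn hX.1).2 hj)

lemma aC_le (hX : X ∈ Em d') {j : ℤ} (hj : X.2 j ≠ 0) : aC d' X ≤ j :=
  (isLeast_aC hX).2 ((mem_suppC_of_suppIn hX.2.1).2 hj)

lemma shift_swap (p p' : ℤ) : shift p' p = -shift p p' := by
  simp only [shift]
  ring

lemma two_mul_shift (p p' : ℤ) : 2 * shift p p' = p' + hatp p' - (p + hatp p) := by
  have h : ∀ r, 2 * ceilHalf r = r + hatp r := fun r => by
    simp only [ceilHalf, hatp, Int.fdiv_eq_ediv_of_nonneg _ (by norm_num : (0 : ℤ) ≤ 2)]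
    omega
  rw [shift, mul_sub, h, h]

lemma shift_J_mem_Ioc (hY : Y ∈ L0 d') :
    shift q (J d' Y q).2 ∈ Set.Ioc (bC d' Y) (aC d' Y) := by
  have h := two_mul_shift q (J d' Y q).2
  simp only [J, hatp] at h ⊢
  have := hY.2
  constructor <;> omega

lemma mem_LambdaSet_of_J_eq (hX : X ∈ Em d') (hY : Y ∈ L0 d') (hJ : J d' Y q = (X, p)) :
    (Y, q) ∈ LambdaSet d' X p := by
  have hp : (J d' Y q).2 = p := congrArg Prod.snd hJ
  have hXY : sigmaP d' (-shift p q) Y = X := by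
    rw [← shift_swap, ← hp]
    exact congrArg Prod.fst hJ
  obtain ⟨hb, ha⟩ : bC d' Y < -shift p q ∧ -shift p q ≤ aC d' Y := by
    rw [← shift_swap, ← hp]
    exact shift_J_mem_Ioc hY
  have hX1 : X.1 = sigmaV d' (-shift p q) Y.1 := congrArg Prod.fst hXY.symm
  have hX2 : X.2 = sigmaV d' (-shift p q) Y.2 := congrArg Prod.snd hXY.symm
  have hwin : ∀ j, X.1 j ≠ 0 ∨ X.2 j ≠ 0 → -(d' : ℤ) ≤ j - shift p q ∧ j - shift p q ≤ d' := by
    rintro j (hj | hj)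
    · rw [hX1, sigmaV_ne_zero_iff] at hj
      omega
    · rw [hX2, sigmaV_ne_zero_iff] at hj
      omega
  have hsup := hwin _ (.inr ((mem_suppC_of_suppIn hX.2.1).1
    (isGreatest_supD (d' := d') (suppC_nonempty hX.2.1 hX.2.2.2)).1))
  have hinf := hwin _ (.inl ((mem_suppC_of_suppIn hX.1).1
    (isLeast_infD (d' := d') (suppC_nonempty hX.1 hX.2.2.1)).1))
  simp only [LambdaSet, Set.mem_ofPred_eq]
  refine ⟨hY.1, by omega, by omega, Y.2, Y.1, ?_, ?_⟩
  · rw [hX1, sigmaV_sigmaV_neg_add_low hY.1.1 fun j hj => ?_]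
    have := le_bC hY.1 hj
    omega
  · rw [hX2, sigmaV_sigmaV_neg_add_high hY.1.2.1 fun j hj => ?_]
    have := aC_le hY.1 hj
    omega

section LambdaSet

variable (hX : (X, p) ∈ Lm d') (hY : (Y, p') ∈ LambdaSet d' X p)
include hX hY

lemma sub_shift_mem_of_mem_LambdaSet {j : ℤ} (hj : X.1 j ≠ 0 ∨ X.2 j ≠ 0) :
    -(d' : ℤ) ≤ j - shift p p' ∧ j - shift p p' ≤ d' := by
  simp only [Lm, LambdaSet, Set.mem_ofPred_eq] at hX hY
  obtain ⟨hEm, hba, -⟩ := hX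
  obtain ⟨-, hlo, hhi, -⟩ := hY
  have hinf : ∀ {k}, X.1 k ≠ 0 → infD d' (suppC d' X.1) ≤ k := fun hk =>
    have hk := (mem_suppC_of_suppIn hEm.1).2 hk
    (isLeast_infD ⟨_, hk⟩).2 hk
  have hsup : ∀ {k}, X.2 k ≠ 0 → k ≤ supD d' (suppC d' X.2) := fun hk =>
    have hk := (mem_suppC_of_suppIn hEm.2.1).2 hk
    (isGreatest_supD ⟨_, hk⟩).2 hk
  have hb := hinf (mem_suppC.1 (isGreatest_bC hEm).1).2
  have ha := hsup (mem_suppC.1 (isLeast_aC hEm).1).2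
  rcases hj with hj | hj
  · have := hinf hj
    have := le_bC hEm hj
    omega
  · have := hsup hj
    have := aC_le hEm hj
    omega

lemma bC_eq_of_mem_LambdaSet :
    bC d' Y = bC d' X - shift p p' ∧
      supD d' (suppC d' (sigmaV d' (shift p p') X.1)) = bC d' X - shift p p' := by
  have hEm : X ∈ Em d' := hX.1
  have hbX := mem_suppC.1 (isGreatest_bC hEm).1
  have hwin := sub_shift_mem_of_mem_LambdaSet hX hY (.inl hbX.2)
  have hσ := isGreatest_suppC_sigmaV (isGreatest_bC hEm) hwin.1 hwin.2
  refine ⟨?_, supD_eq_of_isGreatest hσ⟩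
  simp only [LambdaSet, Set.mem_ofPred_eq] at hY
  obtain ⟨-, -, -, -, f, hY1, -⟩ := hY
  rw [bC, hY1]
  refine supD_eq_of_isGreatest (isGreatest_suppC_add (W := fun j =>
    if -(d' : ℤ) ≤ j ∧ j ≤ -(d' : ℤ) - shift p p' - 1 then f j else 0) hσ fun j hj => ?_)
  split_ifs at hj with h
  · omega
  · exact absurd rfl hj

lemma aC_eq_of_mem_LambdaSet :
    aC d' Y = aC d' X - shift p p' ∧
      infD d' (suppC d' (sigmaV d' (shift p p') X.2)) = aC d' X - shift p p' := by
  have hEm : X ∈ Em d' := hX.1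
  have haX := mem_suppC.1 (isLeast_aC hEm).1
  have hwin := sub_shift_mem_of_mem_LambdaSet hX hY (.inr haX.2)
  have hσ := isLeast_suppC_sigmaV (isLeast_aC hEm) hwin.1 hwin.2
  refine ⟨?_, infD_eq_of_isLeast hσ⟩
  simp only [LambdaSet, Set.mem_ofPred_eq] at hY
  obtain ⟨-, -, -, f, -, -, hY2⟩ := hY
  rw [aC, hY2]
  refine infD_eq_of_isLeast (isLeast_suppC_add (W := fun j =>
    if (d' : ℤ) - shift p p' + 1 ≤ j ∧ j ≤ d' then f j else 0) hσ fun j hj => ?_)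
  split_ifs at hj with h
  · omega
  · exact absurd rfl hj

lemma mem_L0_of_mem_LambdaSet : Y ∈ L0 d' := by
  refine ⟨hY.1, ?_⟩
  rw [(bC_eq_of_mem_LambdaSet hX hY).1, (aC_eq_of_mem_LambdaSet hX hY).1]
  exact sub_lt_sub_right hX.2.1 _

lemma J_eq_of_mem_LambdaSet : J d' Y p' = (X, p) := by
  have hp : p' + aC d' Y + bC d' Y + hatp p' = p := by
    have := two_mul_shift p p'
    rw [(bC_eq_of_mem_LambdaSet hX hY).1, (aC_eq_of_mem_LambdaSet hX hY).1]
    linarith [hX.2.2]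
  have hwin {j} (hj : X.1 j ≠ 0 ∨ X.2 j ≠ 0) :=
    sub_shift_mem_of_mem_LambdaSet hX hY hj
  simp only [LambdaSet, Set.mem_ofPred_eq] at hY
  obtain ⟨-, -, -, f, g, hY1, hY2⟩ := hY
  simp only [J, hp, shift_swap p p', sigmaP, hY1, hY2]
  congr
  · exact sigmaV_neg_add_low (fun j hj => ⟨(hX.1.1 j hj).1, (hX.1.1 j hj).2, hwin (.inl hj)⟩) g
  · exact sigmaV_neg_add_high (fun j hj => ⟨(hX.1.2.1 j hj).1, (hX.1.2.1 j hj).2, hwin (.inr hj)⟩) f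

end LambdaSet

end Centering

theorem preimage_J_eq_Lambda_general (d' : ℕ) :
    ∀ Xp ∈ Lm d',
      {Yq : EC × ℤ | Yq.1 ∈ L0 d' ∧ J d' Yq.1 Yq.2 = Xp} = LambdaSet d' Xp.1 Xp.2 ∧
      (∀ Yq ∈ LambdaSet d' Xp.1 Xp.2, Yq.1 ∈ L0 d') ∧
      (∀ Yq ∈ LambdaSet d' Xp.1 Xp.2,
        bC d' Yq.1 = supD d' (suppC d' (sigmaV d' (shift Xp.2 Yq.2) Xp.1.1)) ∧
        aC d' Yq.1 = infD d' (suppC d' (sigmaV d' (shift Xp.2 Yq.2) Xp.1.2))) := by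
  rintro ⟨X, p⟩ hX
  refine ⟨Set.ext fun ⟨Y, q⟩ => ⟨fun hY => mem_LambdaSet_of_J_eq hX.1 hY.1 hY.2,
    fun hY => ⟨mem_L0_of_mem_LambdaSet hX hY, J_eq_of_mem_LambdaSet hX hY⟩⟩,
    fun ⟨Y, q⟩ hY => mem_L0_of_mem_LambdaSet hX hY, fun ⟨Y, q⟩ hY => ⟨?_, ?_⟩⟩
  · obtain ⟨hb, hσ⟩ := bC_eq_of_mem_LambdaSet hX hY
    exact hb.trans hσ.symm
  · obtain ⟨ha, hσ⟩ := aC_eq_of_mem_LambdaSet hX hY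
    exact ha.trans hσ.symm

/-- Lemmas E.2 and E.3 of Cont–Degond–Xuan: pre-image of the
centering operator: for `(X,p) ∈ L^m`, the set of `(Y,q) ∈ L⁰ × ℤ` with
`J(Y,q) = (X,p)` is exactly `Λ(X,p)`; moreover `Λ(X,p) ⊆ L⁰ × ℤ` and, for every
`(Y,p') ∈ Λ(X,p)`, `b(Y) = sup supp(σ_{[p,p']}(X)⁺)` and
`a(Y) = inf supp(σ_{[p,p']}(X)⁻)`. -/
theorem preimage_J_eq_Lambda (d' : ℕ) (hd' : 1 ≤ d') :
    ∀ Xp ∈ Lm d',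
      {Yq : EC × ℤ | Yq.1 ∈ L0 d' ∧ J d' Yq.1 Yq.2 = Xp} = LambdaSet d' Xp.1 Xp.2 ∧
      (∀ Yq ∈ LambdaSet d' Xp.1 Xp.2, Yq.1 ∈ L0 d') ∧
      (∀ Yq ∈ LambdaSet d' Xp.1 Xp.2,
        bC d' Yq.1 = supD d' (suppC d' (sigmaV d' (shift Xp.2 Yq.2) Xp.1.1)) ∧
        aC d' Yq.1 = infD d' (suppC d' (sigmaV d' (shift Xp.2 Yq.2) Xp.1.2))) :=
  preimage_J_eq_Lambda_general d'

end COB
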